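/- Fix real parameters α, ξ, ν and let u be a normalized (α,ξ,ν)-eigenfunction. Then the first two moments satisfy M₁ = ∫₀^∞ (ξ−t)u(t)² dt = (u(0)²/2)( ξ² + 1 − ν − (α−ξ)² ) and M₂ = ∫₀^∞ (ξ−t)²u(t)² dt = (ν−1)/2 + (u(0)²/4)( −(α−ξ) + ξ( ξ² + 1 − ν − (α−ξ)² ) ). -/

import Mathlib

open MeasureTheory

/-- An `(α,ξ,ν)`-eigenfunction: a smooth function on `ℝ` which, together with all its
derivatives, decays faster than any polynomial on `[0,∞)`, solves
`−u'' + ((ξ−t)² + 1)u = νu` on `[0,∞)`, and satisfies the Robin condition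
`u'(0) = (α−ξ)u(0)`. -/
def IsEigen (α ξ ν : ℝ) (u : ℝ → ℝ) : Prop :=
  ContDiff ℝ (⊤ : ℕ∞) u ∧
  (∀ n k : ℕ, ∃ C : ℝ, ∀ t : ℝ, 0 ≤ t → |t| ^ k * |iteratedDeriv n u t| ≤ C) ∧
  (∀ t : ℝ, 0 ≤ t → -(deriv (deriv u) t) + ((ξ - t) ^ 2 + 1) * u t = ν * u t) ∧
  deriv u 0 = (α - ξ) * u 0

/-!
With `V t = (ξ - t) ^ 2 + 1 - ν` the equation reads `u'' = V u`. Then the energy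
`E = u' ^ 2 - V u ^ 2` satisfies `E' = -V' u ^ 2 = 2 (ξ - t) u ^ 2`, and the virial quantity
`u u' + (ξ - t) E` has derivative `4 (ξ - t) ^ 2 u ^ 2 + 2 (1 - ν) u ^ 2`. Integrating both over
`(0, ∞)`, the boundary terms at infinity vanish by rapid decay, and at `0` the Robin condition
expresses `u'(0)` through `u(0)`.
-/

open Asymptotics Filter Set Topology

namespace Asymptotics.SuperpolynomialDecay

variable {α β : Type*} [TopologicalSpace β] {l : Filter α} {k f g : α → β}

theorem tendsto_zero [CommSemiring β] (hf : SuperpolynomialDecay l k f) :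
    Tendsto f l (𝓝 0) := by
  simpa using hf 0

theorem sub [CommRing β] [IsTopologicalRing β] (hf : SuperpolynomialDecay l k f)
    (hg : SuperpolynomialDecay l k g) : SuperpolynomialDecay l k (f - g) := fun n => by
  simpa [mul_sub] using (hf n).sub (hg n)

theorem sub_pow_mul {f : ℝ → ℝ} (hf : SuperpolynomialDecay atTop id f) (ξ : ℝ) (n : ℕ) :
    SuperpolynomialDecay atTop id fun t => (ξ - t) ^ n * f t :=
  (hf.polynomial_mul ((Polynomial.C ξ - Polynomial.X) ^ n)).congr fun t => by simp

theorem integrableOn_Ioi {f : ℝ → ℝ} (hf : SuperpolynomialDecay atTop id f) {a : ℝ}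
    (hc : ContinuousOn f (Ici a)) : IntegrableOn f (Ioi a) := by
  have hO : f =O[atTop] fun t : ℝ => t ^ (-2 : ℝ) := by
    simpa [← Real.rpow_intCast] using (superpolynomialDecay_iff_isBigO f tendsto_id).1 hf (-2)
  exact ((hc.locallyIntegrableOn measurableSet_Ici).integrableOn_of_isBigO_atTop hO
    (integrableAtFilter_rpow_atTop_iff.2 (by norm_num))).mono_set Ioi_subset_Ici_self

end Asymptotics.SuperpolynomialDecay

theorem superpolynomialDecay_of_forall_abs_pow_mul_le {f : ℝ → ℝ}
    (h : ∀ k : ℕ, ∃ C : ℝ, ∀ t : ℝ, 0 ≤ t → |t| ^ k * |f t| ≤ C) :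
    SuperpolynomialDecay atTop id f := by
  refine (superpolynomialDecay_iff_abs_isBoundedUnder f tendsto_id).2 fun k => ?_
  obtain ⟨C, hC⟩ := h k
  refine isBoundedUnder_of_eventually_le (a := C) ?_
  filter_upwards [eventually_ge_atTop 0] with t ht
  simpa [abs_mul] using hC t ht

theorem HasDerivAt.deriv_sq_sub_mul_sq {u u' V : ℝ → ℝ} {t v : ℝ}
    (hu : HasDerivAt u (u' t) t) (hu' : HasDerivAt u' (V t * u t) t) (hV : HasDerivAt V v t) :
    HasDerivAt (fun s => u' s ^ 2 - V s * u s ^ 2) (-(v * u t ^ 2)) t :=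
  ((hu'.pow 2).sub (hV.mul (hu.pow 2))).congr_deriv (by simp only [Pi.pow_apply]; push_cast; ring)

namespace IsEigen

variable {α ξ ν : ℝ} {u : ℝ → ℝ}

theorem differentiable (hu : IsEigen α ξ ν u) : Differentiable ℝ u :=
  hu.1.differentiable (by simp)

theorem differentiable_deriv (hu : IsEigen α ξ ν u) : Differentiable ℝ (deriv u) :=
  (hu.1.of_le (WithTop.coe_le_coe.2 le_top)).differentiable_deriv_two

theorem superpolynomialDecay_iteratedDeriv (hu : IsEigen α ξ ν u) (n : ℕ) :
    SuperpolynomialDecay atTop id (iteratedDeriv n u) :=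
  superpolynomialDecay_of_forall_abs_pow_mul_le (hu.2.1 n)

theorem superpolynomialDecay_sq (hu : IsEigen α ξ ν u) :
    SuperpolynomialDecay atTop id fun t => u t ^ 2 := by
  have hdec := hu.superpolynomialDecay_iteratedDeriv 0
  exact (hdec.mul hdec).congr fun t => by simp [sq]

theorem superpolynomialDecay_deriv_sq (hu : IsEigen α ξ ν u) :
    SuperpolynomialDecay atTop id fun t => deriv u t ^ 2 := by
  have hdec := hu.superpolynomialDecay_iteratedDeriv 1
  exact (hdec.mul hdec).congr fun t => by simp [sq]

theorem superpolynomialDecay_mul_deriv (hu : IsEigen α ξ ν u) :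
    SuperpolynomialDecay atTop id fun t => u t * deriv u t :=
  ((hu.superpolynomialDecay_iteratedDeriv 0).mul (hu.superpolynomialDecay_iteratedDeriv 1)).congr
    fun t => by simp

theorem superpolynomialDecay_energy (hu : IsEigen α ξ ν u) :
    SuperpolynomialDecay atTop id
      fun t => deriv u t ^ 2 - ((ξ - t) ^ 2 + 1 - ν) * u t ^ 2 :=
  (hu.superpolynomialDecay_deriv_sq.sub ((hu.superpolynomialDecay_sq.sub_pow_mul ξ 2).add
    (hu.superpolynomialDecay_sq.const_mul (1 - ν)))).congr fun t => by
      simp only [Pi.add_apply, Pi.sub_apply]; ring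

theorem integrableOn_sub_pow_mul_sq (hu : IsEigen α ξ ν u) (n : ℕ) :
    IntegrableOn (fun t => (ξ - t) ^ n * u t ^ 2) (Ioi 0) := by
  have hc := hu.differentiable.continuous
  exact (hu.superpolynomialDecay_sq.sub_pow_mul ξ n).integrableOn_Ioi (by fun_prop)

theorem hasDerivAt_deriv (hu : IsEigen α ξ ν u) {t : ℝ} (ht : 0 ≤ t) :
    HasDerivAt (deriv u) (((ξ - t) ^ 2 + 1 - ν) * u t) t :=
  (hu.differentiable_deriv t).hasDerivAt.congr_deriv (by linear_combination -hu.2.2.1 t ht)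

theorem hasDerivAt_energy (hu : IsEigen α ξ ν u) {t : ℝ} (ht : 0 ≤ t) :
    HasDerivAt (fun s => deriv u s ^ 2 - ((ξ - s) ^ 2 + 1 - ν) * u s ^ 2)
      (2 * ((ξ - t) * u t ^ 2)) t := by
  have hV : HasDerivAt (fun s => (ξ - s) ^ 2 + 1 - ν) (-(2 * (ξ - t))) t :=
    ((((hasDerivAt_id' t).const_sub ξ).pow 2).add_const 1).sub_const ν |>.congr_deriv
      (by norm_num)
  exact ((hu.differentiable t).hasDerivAt.deriv_sq_sub_mul_sq (hu.hasDerivAt_deriv ht)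
    hV).congr_deriv (by ring)

theorem hasDerivAt_virial (hu : IsEigen α ξ ν u) {t : ℝ} (ht : 0 ≤ t) :
    HasDerivAt
      (fun s => u s * deriv u s + (ξ - s) * (deriv u s ^ 2 - ((ξ - s) ^ 2 + 1 - ν) * u s ^ 2))
      (4 * ((ξ - t) ^ 2 * u t ^ 2) + 2 * (1 - ν) * u t ^ 2) t :=
  (((hu.differentiable t).hasDerivAt.mul (hu.hasDerivAt_deriv ht)).add
    (((hasDerivAt_id' t).const_sub ξ).mul (hu.hasDerivAt_energy ht))).congr_deriv (by ring)

theorem two_mul_integral_sub_mul_sq (hu : IsEigen α ξ ν u) :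
    2 * ∫ t in Ioi 0, (ξ - t) * u t ^ 2 = (ξ ^ 2 + 1 - ν) * u 0 ^ 2 - deriv u 0 ^ 2 := by
  have hint : IntegrableOn (fun t => 2 * ((ξ - t) * u t ^ 2)) (Ioi 0) := by
    have h := (hu.integrableOn_sub_pow_mul_sq 1).const_mul 2
    simp only [pow_one] at h
    exact h
  rw [← integral_const_mul, integral_Ioi_of_hasDerivAt_of_tendsto'
    (fun t ht => hu.hasDerivAt_energy ht) hint hu.superpolynomialDecay_energy.tendsto_zero]
  ring

theorem four_mul_integral_sub_sq_mul_sq_add (hu : IsEigen α ξ ν u) :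
    4 * (∫ t in Ioi 0, (ξ - t) ^ 2 * u t ^ 2) + 2 * (1 - ν) * ∫ t in Ioi 0, u t ^ 2
      = -(u 0 * deriv u 0) - ξ * (deriv u 0 ^ 2 - (ξ ^ 2 + 1 - ν) * u 0 ^ 2) := by
  have h2 := (hu.integrableOn_sub_pow_mul_sq 2).const_mul 4
  have h0 : IntegrableOn (fun t => 2 * (1 - ν) * u t ^ 2) (Ioi 0) := by
    have h := (hu.integrableOn_sub_pow_mul_sq 0).const_mul (2 * (1 - ν))
    simp only [pow_zero, one_mul] at h
    exact h
  have hdec :=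
    hu.superpolynomialDecay_mul_deriv.add (hu.superpolynomialDecay_energy.sub_pow_mul ξ 1)
  rw [← integral_const_mul, ← integral_const_mul, ← integral_add h2 h0,
    integral_Ioi_of_hasDerivAt_of_tendsto' (fun t ht => hu.hasDerivAt_virial ht) (h2.add h0)
      ((hdec.congr fun t => by simp).tendsto_zero)]
  simp only [sub_zero, zero_sub]
  ring

end IsEigen

/-- The first two moments of a normalized `(α,ξ,ν)`-eigenfunction:
`M₁ = (u(0)²/2)(ξ² + 1 − ν − (α−ξ)²)` and
`M₂ = (ν−1)/2 + (u(0)²/4)(−(α−ξ) + ξ(ξ² + 1 − ν − (α−ξ)²))`. -/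
theorem moments_one_two
    (α ξ ν : ℝ) (u : ℝ → ℝ) (hu : IsEigen α ξ ν u)
    (hnorm : ∫ t in Set.Ioi (0 : ℝ), u t ^ 2 = 1) :
    (∫ t in Set.Ioi (0 : ℝ), (ξ - t) * u t ^ 2
        = u 0 ^ 2 / 2 * (ξ ^ 2 + 1 - ν - (α - ξ) ^ 2)) ∧
    (∫ t in Set.Ioi (0 : ℝ), (ξ - t) ^ 2 * u t ^ 2
        = (ν - 1) / 2
          + u 0 ^ 2 / 4 * (-(α - ξ) + ξ * (ξ ^ 2 + 1 - ν - (α - ξ) ^ 2))) := by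
  have hM₁ := hu.two_mul_integral_sub_mul_sq
  have hM₂ := hu.four_mul_integral_sub_sq_mul_sq_add
  rw [hu.2.2.2] at hM₁ hM₂
  rw [hnorm] at hM₂
  exact ⟨by linear_combination hM₁ / 2, by linear_combination hM₂ / 4⟩
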